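/- Let M be a loopless matroid of rank 3 on a finite ground set E and let ℓ ∈ A^1(M) be a combinatorially nef integral divisor class. Then deg_M(ℓ·(ℓ − α + S_{1,M})) ≥ 0, where S_{1,M} = ∑_{F a rank 2 flat of M} x_F. -/

import Mathlib

open scoped Classical
open MvPolynomial

namespace ChowPaper

variable {α : Type*}

/-- A matroid is loopless if every element of the ground set is independent as a singleton. -/
def Loopless (M : Matroid α) : Prop := ∀ a ∈ M.E, M.Indep ({a} : Set α)

/-- The (natural-number) rank of a set in a matroid: the supremum of the cardinalities of
independent subsets. -/
noncomputable def rkN (M : Matroid α) (X : Set α) : ℕ :=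
  sSup {n : ℕ | ∃ I, M.Indep I ∧ I ⊆ X ∧ I.ncard = n}

/-- Nonempty proper flats of a matroid. -/
def PFlat (M : Matroid α) (F : Set α) : Prop := M.IsFlat F ∧ F.Nonempty ∧ F ≠ M.E

/-- The index type of variables of the Chow ring: nonempty proper flats. -/
def FlatIdx (M : Matroid α) := {F : Set α // PFlat M F}

variable (R : Type*) [CommRing R]

/-- The polynomial ring `R[x_F : F a nonempty proper flat]`. -/
abbrev Pre (M : Matroid α) := MvPolynomial (FlatIdx M) R

/-- The linear form `∑_{F ∋ i} x_F`. -/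
noncomputable def alphaPre (M : Matroid α) (i : α) : Pre R M :=
  ∑ᶠ F : FlatIdx M, if i ∈ F.1 then X F else 0

/-- The linear form `∑_{F ∌ i} x_F`. -/
noncomputable def betaPre (M : Matroid α) (i : α) : Pre R M :=
  ∑ᶠ F : FlatIdx M, if i ∉ F.1 then X F else 0

/-- The defining ideal of the Chow ring of a matroid:  generated by products `x_F x_G` for
incomparable flats, and the differences `(∑_{F ∋ i} x_F) - (∑_{F ∋ j} x_F)` for `i j` in the
ground set. -/
noncomputable def chowIdeal (M : Matroid α) : Ideal (Pre R M) :=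
  Ideal.span ({p | ∃ F G : FlatIdx M, ¬ F.1 ⊆ G.1 ∧ ¬ G.1 ⊆ F.1 ∧ p = X F * X G} ∪
    {p | ∃ i ∈ M.E, ∃ j ∈ M.E, p = alphaPre R M i - alphaPre R M j})

/-- The Chow ring of a matroid. -/
abbrev Chow (M : Matroid α) := Pre R M ⧸ chowIdeal R M

/-- The quotient map onto the Chow ring. -/
noncomputable def cmk (M : Matroid α) : Pre R M →+* Chow R M :=
  Ideal.Quotient.mk (chowIdeal R M)

/-- The class `x_F` of a nonempty proper flat in the Chow ring. -/
noncomputable def xcls (M : Matroid α) (F : FlatIdx M) : Chow R M := cmk R M (X F)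

/-- The class `x_F` for any set, with the convention that `x_F = 1` when `F` is not a nonempty
proper flat (in particular `x_∅ = x_E = 1`). -/
noncomputable def xv (M : Matroid α) (F : Set α) : Chow R M :=
  if h : PFlat M F then xcls R M ⟨F, h⟩ else 1

/-- The class `α = ∑_{F ∋ i} x_F` in the Chow ring. -/
noncomputable def alpha (M : Matroid α) (i : α) : Chow R M := cmk R M (alphaPre R M i)

/-- The class `β = ∑_{F ∌ i} x_F` in the Chow ring. -/
noncomputable def beta (M : Matroid α) (i : α) : Chow R M := cmk R M (betaPre R M i)

/-- The class `α_S = α - ∑_{S ⊆ F} x_F`. -/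
noncomputable def alphaS (M : Matroid α) (i : α) (S : Set α) : Chow R M :=
  alpha R M i - cmk R M (∑ᶠ F : FlatIdx M, if S ⊆ F.1 then X F else 0)

/-- The class `β_S = β - ∑_{F ⊆ E \ S} x_F`. -/
noncomputable def betaS (M : Matroid α) (i : α) (S : Set α) : Chow R M :=
  beta R M i - cmk R M (∑ᶠ F : FlatIdx M, if F.1 ⊆ M.E \ S then X F else 0)

/-- The sum of the classes of all flats of a given rank `n`. -/
noncomputable def flatsOfRank (M : Matroid α) (n : ℕ) : Chow R M :=
  cmk R M (∑ᶠ F : FlatIdx M, if rkN M F.1 = n then X F else 0)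

/-- The degree-1 class with coefficients `c`, i.e. `∑_F c_F x_F`. -/
noncomputable def lin (M : Matroid α) (c : FlatIdx M → R) : Chow R M :=
  cmk R M (∑ᶠ F : FlatIdx M, MvPolynomial.C (c F) * X F)

/-- `deg` is a degree map for a rank-`r` matroid if it is linear and sends the monomial of every
complete flag `F_1 ⊊ ⋯ ⊊ F_{r-1}` of nonempty proper flats to `1`.  (By Adiprasito–Huh–Katz such
a map exists and its values on the degree-`(r-1)` part of the Chow ring are uniquely
determined.) -/
def IsDegMap (M : Matroid α) (r : ℕ) (deg : Chow R M →ₗ[R] R) : Prop :=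
  ∀ G : Fin (r - 1) → FlatIdx M, (StrictMono fun t => (G t).1) →
    deg (cmk R M (∏ t, X (G t))) = 1

/-- A finite set of subsets is a flag of (nonempty proper) flats if all members are nonempty
proper flats and they are pairwise comparable. -/
def IsFlagF (M : Matroid α) (S : Finset (Set α)) : Prop :=
  (∀ F ∈ S, PFlat M F) ∧ ∀ F ∈ S, ∀ G ∈ S, F ⊆ G ∨ G ⊆ F

/-- A finite set of nonempty proper flats is a flag if its members are pairwise comparable. -/
def IsFlagIdx (M : Matroid α) (S : Finset (FlatIdx M)) : Prop :=
  ∀ F ∈ S, ∀ G ∈ S, F.1 ⊆ G.1 ∨ G.1 ⊆ F.1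

/-- `N_I`: the number of flags of nonempty proper flats whose set of ranks is exactly `I`. -/
noncomputable def Ncount (M : Matroid α) (I : Finset ℕ) : ℕ :=
  {S : Finset (Set α) | IsFlagF M S ∧ S.image (rkN M) = I}.ncard

/-- `N_{I,s}`: the number of flags of nonempty proper flats with rank set `I` none of whose
members contains `s` (equivalently, whose maximal member does not contain `s`). -/
noncomputable def NcountS (M : Matroid α) (I : Finset ℕ) (s : α) : ℕ :=
  {S : Finset (Set α) | IsFlagF M S ∧ S.image (rkN M) = I ∧ ∀ F ∈ S, s ∉ F}.ncard

/-- Combinatorial nefness (property (P3)): for every flag there is a representation with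
coefficients vanishing on the flag and nonnegative on every flat that can be inserted into the
flag. -/
def CombNef (M : Matroid α) (ℓ : Chow ℝ M) : Prop :=
  ∀ S : Finset (FlatIdx M), IsFlagIdx M S →
    ∃ c : FlatIdx M → ℝ, ℓ = lin ℝ M c ∧ (∀ F ∈ S, c F = 0) ∧
      ∀ F : FlatIdx M, F ∉ S → (∀ G ∈ S, F.1 ⊆ G.1 ∨ G.1 ⊆ F.1) → 0 ≤ c F

/-- Combinatorial ampleness: as nefness, with strictly positive coefficients on insertable
flats. -/
def CombAmple (M : Matroid α) (ℓ : Chow ℝ M) : Prop :=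
  ∀ S : Finset (FlatIdx M), IsFlagIdx M S →
    ∃ c : FlatIdx M → ℝ, ℓ = lin ℝ M c ∧ (∀ F ∈ S, c F = 0) ∧
      ∀ F : FlatIdx M, F ∉ S → (∀ G ∈ S, F.1 ⊆ G.1 ∨ G.1 ⊆ F.1) → 0 < c F

/-- Property (P2): for every flag there is a representation with coefficients vanishing on the
flag and nonnegative on all nonempty proper flats. -/
def P2 (M : Matroid α) (ℓ : Chow ℝ M) : Prop :=
  ∀ S : Finset (FlatIdx M), IsFlagIdx M S →
    ∃ c : FlatIdx M → ℝ, ℓ = lin ℝ M c ∧ (∀ F ∈ S, c F = 0) ∧ ∀ F : FlatIdx M, 0 ≤ c F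

/-- The fake effective cone: classes with nonnegative degree against every product of `r - 2`
combinatorially nef classes. -/
noncomputable def FakeEff (M : Matroid α) (r : ℕ) (deg : Chow ℝ M →ₗ[ℝ] ℝ) : Set (Chow ℝ M) :=
  {D | ∀ L : Fin (r - 2) → Chow ℝ M, (∀ t, CombNef M (L t)) → 0 ≤ deg (D * ∏ t, L t)}

/-- The matroid base polytope, as a subset of `α → ℝ`: the convex hull of the indicator
vectors of the bases. -/
noncomputable def polytope (M : Matroid α) : Set (α → ℝ) :=
  convexHull ℝ {x | ∃ B, M.IsBase B ∧ x = B.indicator 1}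

/-- The flag-counting function `N̂_{𝓕,I}` of Theorem 6.2: the number of flags of nonempty proper
flats with rank set `I`, disjoint from `𝓕` and forming a flag of flats together with `𝓕`,
provided every member of `𝓕` is a flat; and `0` otherwise. -/
noncomputable def Nhat (M : Matroid α) (Fl : Finset (Set α)) (I : Finset ℕ) : ℤ :=
  if ∀ F ∈ Fl, M.IsFlat F then
    ({G : Finset (Set α) | IsFlagF M G ∧ G.image (rkN M) = I ∧ Disjoint G Fl ∧
      IsFlagF M (G ∪ Fl)}).ncard
  else 0


/-! ### Auxiliary development for the proof of `stmt7` -/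

section Aux7

open Set

variable {M : Matroid α}

lemma aux_flat_closure (M : Matroid α) (X : Set α) : M.IsFlat (M.closure X) := by
  rw [Matroid.closure_def]
  have hne : {F | M.IsFlat F ∧ X ∩ M.E ⊆ F}.Nonempty :=
    ⟨M.E, M.ground_isFlat, Set.inter_subset_right⟩
  haveI := hne.coe_sort
  rw [sInter_eq_iInter]
  exact Matroid.IsFlat.iInter fun F => F.2.1

lemma aux_rkN_bdd (hfin : M.E.Finite) {X : Set α} (hX : X ⊆ M.E) :
    BddAbove {n : ℕ | ∃ I, M.Indep I ∧ I ⊆ X ∧ I.ncard = n} := by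
  refine ⟨X.ncard, ?_⟩
  rintro n ⟨J, hJ, hJX, rfl⟩
  exact Set.ncard_le_ncard hJX (hfin.subset hX)

lemma aux_rkN_eq_of_basis (hfin : M.E.Finite) {I X : Set α} (hX : X ⊆ M.E) (hI : M.IsBasis I X) :
    rkN M X = I.ncard := by
  have hXfin : X.Finite := hfin.subset hX
  apply le_antisymm
  · refine csSup_le ⟨0, ∅, M.empty_indep, empty_subset _, by simp⟩ ?_
    rintro n ⟨J, hJ, hJX, rfl⟩
    obtain ⟨J', hJ', hJJ'⟩ := hJ.subset_isBasis_of_subset hJX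
    have hcard : J'.ncard = I.ncard := by
      have := hJ'.encard_eq_encard hI
      simp [Set.ncard_def, this]
    calc J.ncard ≤ J'.ncard := Set.ncard_le_ncard hJJ' (hXfin.subset hJ'.subset)
      _ = I.ncard := hcard
  · exact le_csSup (aux_rkN_bdd hfin hX) ⟨I, hI.indep, hI.subset, rfl⟩

lemma aux_rkN_indep (hfin : M.E.Finite) {I : Set α} (hI : M.Indep I) : rkN M I = I.ncard :=
  aux_rkN_eq_of_basis hfin hI.subset_ground hI.isBasis_self

lemma aux_rkN_closure (hfin : M.E.Finite) {X : Set α} (hX : X ⊆ M.E) :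
    rkN M (M.closure X) = rkN M X := by
  obtain ⟨I, hI⟩ := M.exists_isBasis X hX
  rw [aux_rkN_eq_of_basis hfin hX hI,
    aux_rkN_eq_of_basis hfin (M.closure_subset_ground X) hI.isBasis_closure_right]

lemma aux_rkN_le_of_subset (hfin : M.E.Finite) {X Y : Set α} (hXY : X ⊆ Y) (hY : Y ⊆ M.E) :
    rkN M X ≤ rkN M Y := by
  refine csSup_le ⟨0, ∅, M.empty_indep, empty_subset _, by simp⟩ ?_
  rintro n ⟨J, hJ, hJX, rfl⟩
  exact le_csSup (aux_rkN_bdd hfin hY) ⟨J, hJ, hJX.trans hXY, rfl⟩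

lemma aux_rkN_lt_of_flat_ssubset (hfin : M.E.Finite) {F G : Set α}
    (hF : M.IsFlat F) (hG : M.IsFlat G) (hss : F ⊂ G) : rkN M F < rkN M G := by
  obtain ⟨I, hI⟩ := M.exists_isBasis F hF.subset_ground
  obtain ⟨x, hxG, hxF⟩ := exists_of_ssubset hss
  have hxI : x ∉ I := fun h => hxF (hI.subset h)
  have hxE : x ∈ M.E := hG.subset_ground hxG
  have hclI : M.closure I = F := by rw [hI.closure_eq_closure, hF.closure]
  have hins : M.Indep (insert x I) := by
    rw [hI.indep.insert_indep_iff]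
    exact Or.inl ⟨hxE, by rw [hclI]; exact hxF⟩
  have h1 : rkN M G ≥ (insert x I).ncard :=
    le_csSup (aux_rkN_bdd hfin hG.subset_ground)
      ⟨insert x I, hins, insert_subset hxG (hI.subset.trans hss.subset), rfl⟩
  have hIfin : I.Finite := hfin.subset (hI.indep.subset_ground)
  rw [Set.ncard_insert_of_notMem hxI hIfin] at h1
  rw [aux_rkN_eq_of_basis hfin hF.subset_ground hI]
  omega

lemma aux_flat_eq_of_subset_of_rkN_le (hfin : M.E.Finite) {F G : Set α}
    (hF : M.IsFlat F) (hG : M.IsFlat G) (hss : F ⊆ G) (h : rkN M G ≤ rkN M F) : F = G := by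
  by_contra hne
  exact absurd h (not_le.2 (aux_rkN_lt_of_flat_ssubset hfin hF hG
    ⟨hss, fun h' => hne (hss.antisymm h')⟩))

lemma aux_one_le_rkN_of_mem (hfin : M.E.Finite) (hloop : Loopless M) {F : Set α}
    (hFE : F ⊆ M.E) {i : α} (hi : i ∈ F) : 1 ≤ rkN M F := by
  apply le_csSup (aux_rkN_bdd hfin hFE)
  exact ⟨{i}, hloop i (hFE hi), singleton_subset_iff.2 hi, Set.ncard_singleton i⟩

lemma aux_rkN_cl_singleton (hfin : M.E.Finite) (hloop : Loopless M) {i : α} (hi : i ∈ M.E) :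
    rkN M (M.closure {i}) = 1 := by
  rw [aux_rkN_closure hfin (singleton_subset_iff.2 hi), aux_rkN_indep hfin (hloop i hi),
    Set.ncard_singleton]

lemma aux_pflat_rk (hfin : M.E.Finite) (hloop : Loopless M) (hr : rkN M M.E = 3) {F : Set α}
    (hF : PFlat M F) : rkN M F = 1 ∨ rkN M F = 2 := by
  obtain ⟨hFl, ⟨i, hi⟩, hne⟩ := hF
  have h1 := aux_one_le_rkN_of_mem hfin hloop hFl.subset_ground hi
  have h2 : rkN M F < 3 := by
    rw [← hr]
    exact aux_rkN_lt_of_flat_ssubset hfin hFl M.ground_isFlat ⟨hFl.subset_ground, fun h =>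
      hne (hFl.subset_ground.antisymm h)⟩
  omega

lemma aux_atom_eq_cl (hfin : M.E.Finite) (hloop : Loopless M) {F : Set α}
    (hF : M.IsFlat F) (h1 : rkN M F = 1) {i : α} (hi : i ∈ F) : F = M.closure {i} := by
  have hiE : i ∈ M.E := hF.subset_ground hi
  have hsub : M.closure {i} ⊆ F := by
    rw [← hF.closure]
    exact M.closure_subset_closure (singleton_subset_iff.2 hi)
  refine ((aux_flat_eq_of_subset_of_rkN_le hfin (aux_flat_closure M {i}) hF hsub ?_).symm)
  rw [h1, aux_rkN_cl_singleton hfin hloop hiE]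

lemma aux_rkN_nonempty (hfin : M.E.Finite) {F : Set α} (hFE : F ⊆ M.E) (h1 : 1 ≤ rkN M F) :
    F.Nonempty := by
  by_contra h
  rw [not_nonempty_iff_eq_empty] at h
  subst h
  have : rkN M (∅ : Set α) = 0 := by
    rw [aux_rkN_indep hfin M.empty_indep, Set.ncard_empty]
  omega

/-- Existence and uniqueness of the line through an atom `a` and a point `j ∉ a`. -/
lemma aux_line_through (hfin : M.E.Finite) (hloop : Loopless M) {a : Set α}
    (ha : M.IsFlat a) (h1 : rkN M a = 1) {j : α} (hj : j ∈ M.E) (hja : j ∉ a) :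
    M.IsFlat (M.closure (a ∪ {j})) ∧ rkN M (M.closure (a ∪ {j})) = 2 ∧
      a ⊆ M.closure (a ∪ {j}) ∧ j ∈ M.closure (a ∪ {j}) ∧
      ∀ F, M.IsFlat F → rkN M F = 2 → a ⊆ F → j ∈ F → F = M.closure (a ∪ {j}) := by
  have haE : a ⊆ M.E := ha.subset_ground
  have hane : a.Nonempty := aux_rkN_nonempty hfin haE (by omega)
  obtain ⟨i, hia⟩ := hane
  have hiE : i ∈ M.E := haE hia
  have hacl : a = M.closure {i} := aux_atom_eq_cl hfin hloop ha h1 hia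
  have hij : i ≠ j := fun h => hja (h ▸ hia)
  have hindep : M.Indep {i, j} := by
    have : M.Indep (insert j {i}) := by
      rw [(hloop i hiE).insert_indep_iff]
      exact Or.inl ⟨hj, by rw [← hacl]; exact hja⟩
    rwa [Set.pair_comm]
  have hclcl : M.closure (a ∪ {j}) = M.closure {i, j} := by
    rw [hacl, Matroid.closure_union_closure_left_eq]
    congr 1
  have haEj : a ∪ {j} ⊆ M.E := union_subset haE (singleton_subset_iff.2 hj)
  have hrk2 : rkN M (M.closure (a ∪ {j})) = 2 := by
    rw [hclcl, aux_rkN_closure hfin (Set.insert_subset_iff.2 ⟨hiE, Set.singleton_subset_iff.2 hj⟩),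
      aux_rkN_indep hfin hindep, Set.ncard_pair hij]
  refine ⟨aux_flat_closure _ _, hrk2, ?_, ?_, ?_⟩
  · exact (subset_union_left).trans (M.subset_closure _ haEj)
  · exact (M.subset_closure _ haEj) (by simp)
  · intro F hF hF2 haF hjF
    have hsub : M.closure (a ∪ {j}) ⊆ F := by
      rw [← hF.closure]
      exact M.closure_subset_closure (union_subset haF (singleton_subset_iff.2 hjF))
    exact (aux_flat_eq_of_subset_of_rkN_le hfin (aux_flat_closure _ _) hF hsub (by omega)).symm

lemma aux_flatIdx_finite (hfin : M.E.Finite) : Finite (FlatIdx M) := by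
  have h : {F : Set α | PFlat M F}.Finite :=
    hfin.finite_subsets.subset (fun F hF => hF.1.subset_ground)
  exact h.to_subtype

lemma aux_cmk_smul (r : ℝ) (p : Pre ℝ M) : cmk ℝ M (r • p) = r • cmk ℝ M p := rfl

lemma aux_xcls_mul_eq_zero {F G : FlatIdx M} (h1 : ¬ F.1 ⊆ G.1) (h2 : ¬ G.1 ⊆ F.1) :
    xcls ℝ M F * xcls ℝ M G = 0 := by
  rw [xcls, xcls, ← map_mul, cmk, Ideal.Quotient.eq_zero_iff_mem]
  exact Ideal.subset_span (Or.inl ⟨F, G, h1, h2, rfl⟩)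

lemma aux_alpha_eq_alpha {i j : α} (hi : i ∈ M.E) (hj : j ∈ M.E) :
    alpha ℝ M i = alpha ℝ M j := by
  rw [alpha, alpha, ← sub_eq_zero, ← map_sub, cmk, Ideal.Quotient.eq_zero_iff_mem]
  exact Ideal.subset_span (Or.inr ⟨i, hi, j, hj, rfl⟩)

lemma aux_lin_eq_sum [Fintype (FlatIdx M)] (c : FlatIdx M → ℝ) :
    lin ℝ M c = ∑ F : FlatIdx M, c F • xcls ℝ M F := by
  rw [lin, finsum_eq_sum_of_fintype, map_sum]
  congr 1
  ext F
  rw [← smul_eq_C_mul, aux_cmk_smul, xcls]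

lemma aux_alpha_eq_sum [Fintype (FlatIdx M)] (i : α) :
    alpha ℝ M i = ∑ F : FlatIdx M, if i ∈ F.1 then xcls ℝ M F else 0 := by
  rw [alpha, alphaPre, finsum_eq_sum_of_fintype, map_sum]
  congr 1
  ext F
  split <;> simp [xcls]

lemma aux_flatsOfRank_eq_sum [Fintype (FlatIdx M)] (n : ℕ) :
    flatsOfRank ℝ M n = ∑ F : FlatIdx M, if rkN M F.1 = n then xcls ℝ M F else 0 := by
  rw [flatsOfRank, finsum_eq_sum_of_fintype, map_sum]
  congr 1
  ext F
  split <;> simp [xcls]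

end Aux7

section Aux7b

open Set Finset

variable {M : Matroid α} [Fintype (FlatIdx M)]

/-- The finset of rank-one proper flats (atoms). -/
noncomputable def atomsF (M : Matroid α) [Fintype (FlatIdx M)] : Finset (FlatIdx M) :=
  Finset.univ.filter (fun F => rkN M F.1 = 1)

/-- The finset of rank-two proper flats (lines). -/
noncomputable def linesF (M : Matroid α) [Fintype (FlatIdx M)] : Finset (FlatIdx M) :=
  Finset.univ.filter (fun F => rkN M F.1 = 2)

/-- The lines containing a given flat. -/
noncomputable def linesThru (M : Matroid α) [Fintype (FlatIdx M)] (a : FlatIdx M) :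
    Finset (FlatIdx M) :=
  (linesF M).filter (fun L => a.1 ⊆ L.1)

/-- The atoms contained in a given flat. -/
noncomputable def atomsIn (M : Matroid α) [Fintype (FlatIdx M)] (L : FlatIdx M) :
    Finset (FlatIdx M) :=
  (atomsF M).filter (fun a => a.1 ⊆ L.1)

variable (hfin : M.E.Finite) (hloop : Loopless M) (hr : rkN M M.E = 3)

set_option linter.unusedSectionVars false

include hfin hloop hr

lemma aux_atom_eq_atom {a b : FlatIdx M} (ha : rkN M a.1 = 1) (hb : rkN M b.1 = 1)
    (hsub : a.1 ⊆ b.1) : a = b :=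
  Subtype.ext (aux_flat_eq_of_subset_of_rkN_le hfin a.2.1 b.2.1 hsub (by omega))

lemma aux_line_eq_line {a b : FlatIdx M} (ha : rkN M a.1 = 2) (hb : rkN M b.1 = 2)
    (hsub : a.1 ⊆ b.1) : a = b :=
  Subtype.ext (aux_flat_eq_of_subset_of_rkN_le hfin a.2.1 b.2.1 hsub (by omega))

lemma aux_line_not_sub_atom {L a : FlatIdx M} (hL : rkN M L.1 = 2) (ha : rkN M a.1 = 1) :
    ¬ L.1 ⊆ a.1 := by
  intro h
  have := aux_rkN_le_of_subset hfin h a.2.1.subset_ground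
  omega

lemma aux_atom_ssub_line {a L : FlatIdx M} (ha : rkN M a.1 = 1) (hL : rkN M L.1 = 2)
    (hsub : a.1 ⊆ L.1) : a.1 ⊂ L.1 :=
  ⟨hsub, fun h => by have := aux_rkN_le_of_subset hfin h a.2.1.subset_ground; omega⟩

lemma aux_atoms_unique {a b : FlatIdx M} (ha : rkN M a.1 = 1) (hb : rkN M b.1 = 1)
    {i : α} (hia : i ∈ a.1) (hib : i ∈ b.1) : a = b := by
  apply Subtype.ext
  rw [aux_atom_eq_cl hfin hloop a.2.1 ha hia, aux_atom_eq_cl hfin hloop b.2.1 hb hib]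

variable {deg : Chow ℝ M →ₗ[ℝ] ℝ} (hdeg : IsDegMap ℝ M 3 deg)

include hdeg

lemma aux_deg_flag {F G : FlatIdx M} (hss : F.1 ⊂ G.1) :
    deg (xcls ℝ M F * xcls ℝ M G) = 1 := by
  have h := hdeg ![F, G] ?_
  · rw [← h]
    congr 1
    rw [xcls, xcls, ← map_mul]
    congr 1
    show X F * X G = ∏ t : Fin 2, X (![F, G] t)
    rw [Fin.prod_univ_two]
    simp
  · intro a b hab
    fin_cases a <;> fin_cases b <;> simp_all

/-- `deg (x_F x_G)` for distinct flats: `1` when comparable, `0` otherwise. -/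
lemma aux_deg_xx_ne {F G : FlatIdx M} (hne : F ≠ G) (h : ¬ (F.1 ⊆ G.1 ∨ G.1 ⊆ F.1)) :
    deg (xcls ℝ M F * xcls ℝ M G) = 0 := by
  push_neg at h
  rw [aux_xcls_mul_eq_zero h.1 h.2, map_zero]

lemma aux_deg_atom_atom {a b : FlatIdx M} (ha : rkN M a.1 = 1) (hb : rkN M b.1 = 1)
    (hne : a ≠ b) : deg (xcls ℝ M a * xcls ℝ M b) = 0 := by
  refine aux_deg_xx_ne hfin hloop hr hdeg hne ?_
  rintro (h | h)
  · exact hne (aux_atom_eq_atom hfin hloop hr ha hb h)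
  · exact hne (aux_atom_eq_atom hfin hloop hr hb ha h).symm

lemma aux_deg_line_line {L L' : FlatIdx M} (hL : rkN M L.1 = 2) (hL' : rkN M L'.1 = 2)
    (hne : L ≠ L') : deg (xcls ℝ M L * xcls ℝ M L') = 0 := by
  refine aux_deg_xx_ne hfin hloop hr hdeg hne ?_
  rintro (h | h)
  · exact hne (aux_line_eq_line hfin hloop hr hL hL' h)
  · exact hne (aux_line_eq_line hfin hloop hr hL' hL h).symm

lemma aux_deg_atom_line {a L : FlatIdx M} (ha : rkN M a.1 = 1) (hL : rkN M L.1 = 2) :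
    deg (xcls ℝ M a * xcls ℝ M L) = if a.1 ⊆ L.1 then 1 else 0 := by
  split_ifs with h
  · exact aux_deg_flag hfin hloop hr hdeg (aux_atom_ssub_line hfin hloop hr ha hL h)
  · exact aux_deg_xx_ne hfin hloop hr hdeg
      (fun he => h (he ▸ subset_rfl)) (by
        rintro (h' | h')
        · exact h h'
        · exact aux_line_not_sub_atom hfin hloop hr hL ha h')

end Aux7b

section Aux7c

open Set Finset

variable {M : Matroid α} [Fintype (FlatIdx M)]
  (hfin : M.E.Finite) (hloop : Loopless M) (hr : rkN M M.E = 3)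
  {deg : Chow ℝ M →ₗ[ℝ] ℝ} (hdeg : IsDegMap ℝ M 3 deg)

set_option linter.unusedSectionVars false

include hfin hloop hr hdeg

lemma aux_deg_alpha_atom {i : α} (hi : i ∈ M.E) (a : FlatIdx M) (ha : rkN M a.1 = 1) :
    deg (alpha ℝ M i * xcls ℝ M a) = 1 := by
  obtain ⟨j, hjE, hja⟩ : ∃ j, j ∈ M.E ∧ j ∉ a.1 := by
    obtain ⟨j, hj1, hj2⟩ := Set.exists_of_ssubset
      (ssubset_iff_subset_ne.2 ⟨a.2.1.subset_ground, a.2.2.2⟩)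
    exact ⟨j, hj1, hj2⟩
  obtain ⟨hflat, hrk2, hsubL, hjL, huniq⟩ := aux_line_through hfin hloop a.2.1 ha hjE hja
  have hL0p : PFlat M (M.closure (a.1 ∪ {j})) :=
    ⟨hflat, a.2.2.1.mono hsubL, fun h => by rw [h, hr] at hrk2; omega⟩
  set L0 : FlatIdx M := ⟨M.closure (a.1 ∪ {j}), hL0p⟩ with hL0def
  have hjL0 : j ∈ L0.1 := hjL
  have hsubL0 : a.1 ⊆ L0.1 := hsubL
  have hrkL0 : rkN M L0.1 = 2 := hrk2
  rw [aux_alpha_eq_alpha hi hjE, aux_alpha_eq_sum, Finset.sum_mul, map_sum]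
  have hzero : ∀ F ∈ (Finset.univ : Finset (FlatIdx M)), F ≠ L0 →
      deg ((if j ∈ F.1 then xcls ℝ M F else 0) * xcls ℝ M a) = 0 := by
    intro F _ hne
    by_cases hjF : j ∈ F.1
    · rw [if_pos hjF]
      rcases aux_pflat_rk hfin hloop hr F.2 with h1 | h2
      · exact aux_deg_atom_atom hfin hloop hr hdeg h1 ha (fun h => hja (h ▸ hjF))
      · have hnsub : ¬ a.1 ⊆ F.1 := fun hs =>
          hne (Subtype.ext (huniq F.1 F.2.1 h2 hs hjF))
        rw [mul_comm, aux_deg_atom_line hfin hloop hr hdeg ha h2, if_neg hnsub]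
    · rw [if_neg hjF, zero_mul, map_zero]
  rw [Finset.sum_eq_single_of_mem L0 (Finset.mem_univ _) hzero, if_pos hjL0, mul_comm]
  exact aux_deg_flag hfin hloop hr hdeg (aux_atom_ssub_line hfin hloop hr ha hrkL0 hsubL0)

lemma aux_deg_alpha_line {i : α} (hi : i ∈ M.E) (L : FlatIdx M) (hL : rkN M L.1 = 2) :
    deg (alpha ℝ M i * xcls ℝ M L) = 0 := by
  obtain ⟨j, hjE, hjL⟩ : ∃ j, j ∈ M.E ∧ j ∉ L.1 := by
    obtain ⟨j, hj1, hj2⟩ := Set.exists_of_ssubset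
      (ssubset_iff_subset_ne.2 ⟨L.2.1.subset_ground, L.2.2.2⟩)
    exact ⟨j, hj1, hj2⟩
  rw [aux_alpha_eq_alpha hi hjE, aux_alpha_eq_sum, Finset.sum_mul, map_sum]
  apply Finset.sum_eq_zero
  intro F _
  by_cases hjF : j ∈ F.1
  · rw [if_pos hjF]
    rcases aux_pflat_rk hfin hloop hr F.2 with h1 | h2
    · rw [aux_deg_atom_line hfin hloop hr hdeg h1 hL, if_neg (fun hs => hjL (hs hjF))]
    · exact aux_deg_line_line hfin hloop hr hdeg h2 hL (fun h => hjL (h ▸ hjF))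
  · rw [if_neg hjF, zero_mul, map_zero]

lemma aux_deg_sq_atom (a : FlatIdx M) (ha : rkN M a.1 = 1) :
    deg (xcls ℝ M a * xcls ℝ M a) = 1 - ((linesThru M a).card : ℝ) := by
  obtain ⟨i', hi'a⟩ := a.2.2.1
  have hi'E : i' ∈ M.E := a.2.1.subset_ground hi'a
  have h1 : deg (alpha ℝ M i' * xcls ℝ M a) = 1 :=
    aux_deg_alpha_atom hfin hloop hr hdeg hi'E a ha
  rw [aux_alpha_eq_sum, Finset.sum_mul, map_sum] at h1
  have hsplit : ∀ F : FlatIdx M, deg ((if i' ∈ F.1 then xcls ℝ M F else 0) * xcls ℝ M a)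
      = (if F = a then deg (xcls ℝ M a * xcls ℝ M a) else 0)
        + (if F ∈ linesThru M a then (1 : ℝ) else 0) := by
    intro F
    by_cases hFa : F = a
    · have hnl : a ∉ linesThru M a := by
        intro h
        have := (Finset.mem_filter.1 (Finset.mem_filter.1 h).1).2
        omega
      rw [hFa, if_pos hi'a, if_pos rfl, if_neg hnl, add_zero]
    · rw [if_neg hFa]
      by_cases hi'F : i' ∈ F.1
      · rw [if_pos hi'F]
        rcases aux_pflat_rk hfin hloop hr F.2 with hF1 | hF2
        · exact absurd (aux_atoms_unique hfin hloop hr hF1 ha hi'F hi'a) hFa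
        · by_cases hsub : a.1 ⊆ F.1
          · have hmem : F ∈ linesThru M a := Finset.mem_filter.2
              ⟨Finset.mem_filter.2 ⟨Finset.mem_univ F, hF2⟩, hsub⟩
            rw [if_pos hmem, zero_add, mul_comm,
              aux_deg_atom_line hfin hloop hr hdeg ha hF2, if_pos hsub]
          · have hnl : F ∉ linesThru M a := fun h => hsub (Finset.mem_filter.1 h).2
            rw [if_neg hnl, add_zero, mul_comm,
              aux_deg_atom_line hfin hloop hr hdeg ha hF2, if_neg hsub]
      · have hnl : F ∉ linesThru M a := by
          intro h
          exact hi'F ((Finset.mem_filter.1 h).2 hi'a)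
        rw [if_neg hi'F, if_neg hnl, add_zero, zero_mul, map_zero]
  rw [Finset.sum_congr rfl (fun F _ => hsplit F), Finset.sum_add_distrib,
    Finset.sum_ite_eq' Finset.univ a, if_pos (Finset.mem_univ a), Finset.sum_boole] at h1
  have hcard : Finset.univ.filter (fun F => F ∈ linesThru M a) = linesThru M a := by
    rw [Finset.filter_mem_eq_inter, Finset.univ_inter]
  rw [hcard] at h1
  linarith

lemma aux_deg_sq_line (L : FlatIdx M) (hL : rkN M L.1 = 2) :
    deg (xcls ℝ M L * xcls ℝ M L) = -1 := by
  obtain ⟨i', hi'L⟩ := L.2.2.1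
  have hi'E : i' ∈ M.E := L.2.1.subset_ground hi'L
  have hA0p : PFlat M (M.closure {i'}) := by
    refine ⟨aux_flat_closure M _, ⟨i', M.mem_closure_self i' hi'E⟩, fun h => ?_⟩
    have := aux_rkN_cl_singleton hfin hloop hi'E
    rw [h, hr] at this
    omega
  set A0 : FlatIdx M := ⟨M.closure {i'}, hA0p⟩ with hA0def
  have hA0rk : rkN M A0.1 = 1 := aux_rkN_cl_singleton hfin hloop hi'E
  have hA0sub : A0.1 ⊆ L.1 := by
    have := M.closure_subset_closure (Set.singleton_subset_iff.2 hi'L)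
    rwa [L.2.1.closure] at this
  have hi'A0 : i' ∈ A0.1 := M.mem_closure_self i' hi'E
  have hLA0 : L ≠ A0 := by
    intro h
    rw [h, hA0rk] at hL
    omega
  have h0 : deg (alpha ℝ M i' * xcls ℝ M L) = 0 :=
    aux_deg_alpha_line hfin hloop hr hdeg hi'E L hL
  rw [aux_alpha_eq_sum, Finset.sum_mul, map_sum] at h0
  have hsplit : ∀ F : FlatIdx M, deg ((if i' ∈ F.1 then xcls ℝ M F else 0) * xcls ℝ M L)
      = (if F = L then deg (xcls ℝ M L * xcls ℝ M L) else 0)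
        + (if F = A0 then (1 : ℝ) else 0) := by
    intro F
    by_cases hFL : F = L
    · rw [hFL, if_pos hi'L, if_pos rfl, if_neg hLA0, add_zero]
    · rw [if_neg hFL]
      by_cases hi'F : i' ∈ F.1
      · rw [if_pos hi'F]
        rcases aux_pflat_rk hfin hloop hr F.2 with hF1 | hF2
        · have hFA0 : F = A0 := aux_atoms_unique hfin hloop hr hF1 hA0rk hi'F hi'A0
          subst hFA0
          rw [if_pos rfl, zero_add, aux_deg_atom_line hfin hloop hr hdeg hF1 hL,
            if_pos hA0sub]
        · have hFA0 : F ≠ A0 := by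
            intro h
            rw [h, hA0rk] at hF2
            omega
          rw [if_neg hFA0, add_zero]
          exact aux_deg_line_line hfin hloop hr hdeg hF2 hL hFL
      · have hFA0 : F ≠ A0 := fun h => hi'F (h ▸ hi'A0)
        rw [if_neg hi'F, if_neg hFA0, add_zero, zero_mul, map_zero]
  rw [Finset.sum_congr rfl (fun F _ => hsplit F), Finset.sum_add_distrib,
    Finset.sum_ite_eq' Finset.univ L, if_pos (Finset.mem_univ L),
    Finset.sum_ite_eq' Finset.univ A0, if_pos (Finset.mem_univ A0)] at h0
  linarith

end Aux7c

section Aux7d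

open Set Finset

variable {M : Matroid α} [Fintype (FlatIdx M)]
  (hfin : M.E.Finite) (hloop : Loopless M) (hr : rkN M M.E = 3)
  {deg : Chow ℝ M →ₗ[ℝ] ℝ} (hdeg : IsDegMap ℝ M 3 deg)

set_option linter.unusedSectionVars false

lemma aux_smul_mul (r : ℝ) (w z : Chow ℝ M) : (r • w) * z = r • (w * z) := by
  obtain ⟨p, rfl⟩ := Ideal.Quotient.mk_surjective w
  obtain ⟨q, rfl⟩ := Ideal.Quotient.mk_surjective z
  show (r • cmk ℝ M p) * cmk ℝ M q = r • (cmk ℝ M p * cmk ℝ M q)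
  rw [← aux_cmk_smul, ← map_mul, ← map_mul, ← aux_cmk_smul, smul_mul_assoc]

lemma aux_deg_lin_mul (c : FlatIdx M → ℝ) (z : Chow ℝ M) :
    deg (lin ℝ M c * z) = ∑ F : FlatIdx M, c F * deg (xcls ℝ M F * z) := by
  rw [aux_lin_eq_sum, Finset.sum_mul, map_sum]
  congr 1
  ext F
  rw [aux_smul_mul, map_smul, smul_eq_mul]

lemma aux_S1_eq : flatsOfRank ℝ M 2 = ∑ L ∈ linesF M, xcls ℝ M L := by
  rw [aux_flatsOfRank_eq_sum, ← Finset.sum_filter]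
  rfl

include hfin hloop hr in
lemma aux_sum_split (f : FlatIdx M → ℝ) :
    ∑ F : FlatIdx M, f F = ∑ F ∈ atomsF M, f F + ∑ F ∈ linesF M, f F := by
  have h2 : Finset.univ.filter (fun F : FlatIdx M => ¬ rkN M F.1 = 1) = linesF M := by
    apply Finset.filter_congr
    intro F _
    rcases aux_pflat_rk hfin hloop hr F.2 with h | h <;> simp [h]
  have h1 : Finset.univ.filter (fun F : FlatIdx M => rkN M F.1 = 1) = atomsF M := rfl
  rw [← Finset.sum_filter_add_sum_filter_not Finset.univ (fun F => rkN M F.1 = 1) f, h1, h2]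

lemma aux_double_count (c : FlatIdx M → ℝ) (Z : Finset (FlatIdx M)) :
    ∑ L ∈ Z, ∑ a ∈ atomsIn M L, c a
      = ∑ a ∈ atomsF M, c a * ((Z.filter (fun L => a.1 ⊆ L.1)).card : ℝ) := by
  have h1 : ∀ L ∈ Z, ∑ a ∈ atomsIn M L, c a
      = ∑ a ∈ atomsF M, if a.1 ⊆ L.1 then c a else 0 := by
    intro L _
    rw [atomsIn, Finset.sum_filter]
  rw [Finset.sum_congr rfl h1, Finset.sum_comm]
  apply Finset.sum_congr rfl
  intro a _
  rw [← Finset.sum_filter, Finset.sum_const, nsmul_eq_mul, mul_comm]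

include hfin hloop hr hdeg

lemma aux_m_line (c : FlatIdx M → ℝ) (L : FlatIdx M) (hL : rkN M L.1 = 2) :
    deg (lin ℝ M c * xcls ℝ M L) = (∑ a ∈ atomsIn M L, c a) - c L := by
  rw [aux_deg_lin_mul]
  have hsplit : ∀ F : FlatIdx M, c F * deg (xcls ℝ M F * xcls ℝ M L)
      = (if F ∈ atomsIn M L then c F else 0) - (if F = L then c F else 0) := by
    intro F
    by_cases hFL : F = L
    · have hnl : L ∉ atomsIn M L := by
        intro h
        have := (Finset.mem_filter.1 (Finset.mem_filter.1 h).1).2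
        omega
      rw [hFL, if_pos rfl, if_neg hnl, aux_deg_sq_line hfin hloop hr hdeg L hL]
      ring
    · rw [if_neg hFL]
      rcases aux_pflat_rk hfin hloop hr F.2 with hF1 | hF2
      · by_cases hsub : F.1 ⊆ L.1
        · have hmem : F ∈ atomsIn M L := Finset.mem_filter.2
            ⟨Finset.mem_filter.2 ⟨Finset.mem_univ F, hF1⟩, hsub⟩
          rw [if_pos hmem, aux_deg_atom_line hfin hloop hr hdeg hF1 hL, if_pos hsub]
          ring
        · have hnl : F ∉ atomsIn M L := fun h => hsub (Finset.mem_filter.1 h).2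
          rw [if_neg hnl, aux_deg_atom_line hfin hloop hr hdeg hF1 hL, if_neg hsub]
          ring
      · have hnl : F ∉ atomsIn M L := by
          intro h
          have := (Finset.mem_filter.1 (Finset.mem_filter.1 h).1).2
          omega
        rw [if_neg hnl, aux_deg_line_line hfin hloop hr hdeg hF2 hL hFL]
        ring
  rw [Finset.sum_congr rfl (fun F _ => hsplit F), Finset.sum_sub_distrib,
    Finset.sum_ite_eq' Finset.univ L, if_pos (Finset.mem_univ L)]
  congr 1
  rw [← Finset.sum_filter, Finset.filter_mem_eq_inter, Finset.univ_inter]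

lemma aux_m_atom (c : FlatIdx M → ℝ) (a : FlatIdx M) (ha : rkN M a.1 = 1) :
    deg (lin ℝ M c * xcls ℝ M a)
      = c a * (1 - ((linesThru M a).card : ℝ)) + ∑ L ∈ linesThru M a, c L := by
  rw [aux_deg_lin_mul]
  have hsplit : ∀ F : FlatIdx M, c F * deg (xcls ℝ M F * xcls ℝ M a)
      = (if F = a then c a * (1 - ((linesThru M a).card : ℝ)) else 0)
        + (if F ∈ linesThru M a then c F else 0) := by
    intro F
    by_cases hFa : F = a
    · have hnl : a ∉ linesThru M a := by
        intro h
        have := (Finset.mem_filter.1 (Finset.mem_filter.1 h).1).2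
        omega
      rw [hFa, if_pos rfl, if_neg hnl, aux_deg_sq_atom hfin hloop hr hdeg a ha, add_zero]
    · rw [if_neg hFa]
      rcases aux_pflat_rk hfin hloop hr F.2 with hF1 | hF2
      · have hnl : F ∉ linesThru M a := by
          intro h
          have := (Finset.mem_filter.1 (Finset.mem_filter.1 h).1).2
          omega
        rw [if_neg hnl, aux_deg_atom_atom hfin hloop hr hdeg hF1 ha hFa]
        ring
      · by_cases hsub : a.1 ⊆ F.1
        · have hmem : F ∈ linesThru M a := Finset.mem_filter.2
            ⟨Finset.mem_filter.2 ⟨Finset.mem_univ F, hF2⟩, hsub⟩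
          rw [if_pos hmem, mul_comm (xcls ℝ M F),
            aux_deg_atom_line hfin hloop hr hdeg ha hF2, if_pos hsub]
          ring
        · have hnl : F ∉ linesThru M a := fun h => hsub (Finset.mem_filter.1 h).2
          rw [if_neg hnl, mul_comm (xcls ℝ M F),
            aux_deg_atom_line hfin hloop hr hdeg ha hF2, if_neg hsub]
          ring
  rw [Finset.sum_congr rfl (fun F _ => hsplit F), Finset.sum_add_distrib,
    Finset.sum_ite_eq' Finset.univ a, if_pos (Finset.mem_univ a)]
  congr 1
  rw [← Finset.sum_filter, Finset.filter_mem_eq_inter, Finset.univ_inter]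

lemma aux_m_alpha (c : FlatIdx M → ℝ) {i : α} (hi : i ∈ M.E) :
    deg (lin ℝ M c * alpha ℝ M i) = ∑ a ∈ atomsF M, c a := by
  rw [aux_deg_lin_mul]
  have hsplit : ∀ F : FlatIdx M, c F * deg (xcls ℝ M F * alpha ℝ M i)
      = if F ∈ atomsF M then c F else 0 := by
    intro F
    rcases aux_pflat_rk hfin hloop hr F.2 with hF1 | hF2
    · have hmem : F ∈ atomsF M := Finset.mem_filter.2 ⟨Finset.mem_univ F, hF1⟩
      rw [if_pos hmem, mul_comm (xcls ℝ M F),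
        aux_deg_alpha_atom hfin hloop hr hdeg hi F hF1, mul_one]
    · have hnl : F ∉ atomsF M := by
        intro h
        have := (Finset.mem_filter.1 h).2
        omega
      rw [if_neg hnl, mul_comm (xcls ℝ M F),
        aux_deg_alpha_line hfin hloop hr hdeg hi F hF2, mul_zero]
  rw [Finset.sum_congr rfl (fun F _ => hsplit F), ← Finset.sum_filter,
    Finset.filter_mem_eq_inter, Finset.univ_inter]

end Aux7d

set_option maxHeartbeats 1000000 in
/-- For a combinatorially nef integral divisor class `ℓ` on a rank-3 matroid,
`deg(ℓ·(ℓ - α + S_{1,M})) ≥ 0`. -/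
theorem stmt7 (M : Matroid α) (hfin : M.E.Finite) (hloop : Loopless M)
    (hr : rkN M M.E = 3) (i : α) (hi : i ∈ M.E)
    (deg : Chow ℝ M →ₗ[ℝ] ℝ) (hdeg : IsDegMap ℝ M 3 deg)
    (ℓ : Chow ℝ M) (hint : ∃ m : FlatIdx M → ℤ, ℓ = lin ℝ M fun F => (m F : ℝ))
    (hnef : CombNef M ℓ) :
    0 ≤ deg (ℓ * (ℓ - alpha ℝ M i + flatsOfRank ℝ M 2)) := by
  haveI : Finite (FlatIdx M) := aux_flatIdx_finite hfin
  haveI : Fintype (FlatIdx M) := Fintype.ofFinite _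
  classical
  -- the representation coming from the empty flag: all coefficients nonnegative
  obtain ⟨c, hc, -, hcpos'⟩ := hnef ∅ (fun F hF => absurd hF (Finset.notMem_empty F))
  have hcpos : ∀ F, 0 ≤ c F := fun F =>
    hcpos' F (Finset.notMem_empty F) (fun G hG => absurd hG (Finset.notMem_empty G))
  obtain ⟨mi, hmi⟩ := hint
  have hflag1 : ∀ F : FlatIdx M, IsFlagIdx M {F} := by
    intro F G hG H hH
    rw [Finset.mem_singleton] at hG hH
    rw [hG, hH]
    exact Or.inl subset_rfl
  have hrkA : ∀ a ∈ atomsF M, rkN M a.1 = 1 := fun a haA => (Finset.mem_filter.1 haA).2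
  have hrkL : ∀ L ∈ linesF M, rkN M L.1 = 2 := fun L hLm => (Finset.mem_filter.1 hLm).2
  -- values of the intersection numbers `deg (ℓ · x_F)`
  have hmdL : ∀ L ∈ linesF M,
      deg (ℓ * xcls ℝ M L) = (∑ a ∈ atomsIn M L, c a) - c L := by
    intro L hLm
    rw [hc]
    exact aux_m_line hfin hloop hr hdeg c L (hrkL L hLm)
  have hmdA : ∀ a ∈ atomsF M,
      deg (ℓ * xcls ℝ M a)
        = c a * (1 - ((linesThru M a).card : ℝ)) + ∑ L ∈ linesThru M a, c L := by
    intro a haA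
    rw [hc]
    exact aux_m_atom hfin hloop hr hdeg c a (hrkA a haA)
  -- nonnegativity from nefness at singleton flags
  have hmdLnn : ∀ L ∈ linesF M, 0 ≤ deg (ℓ * xcls ℝ M L) := by
    intro L hLm
    obtain ⟨c', hc', hc'0, hc'pos⟩ := hnef {L} (hflag1 L)
    have hval : deg (ℓ * xcls ℝ M L) = (∑ a ∈ atomsIn M L, c' a) - c' L := by
      rw [hc']
      exact aux_m_line hfin hloop hr hdeg c' L (hrkL L hLm)
    rw [hval, hc'0 L (Finset.mem_singleton_self L), sub_zero]
    apply Finset.sum_nonneg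
    intro a haI
    have haA : rkN M a.1 = 1 := (Finset.mem_filter.1 (Finset.mem_filter.1 haI).1).2
    have hsub : a.1 ⊆ L.1 := (Finset.mem_filter.1 haI).2
    apply hc'pos
    · rw [Finset.mem_singleton]
      intro h
      rw [h] at haA
      have := hrkL L hLm
      omega
    · intro G hG
      rw [Finset.mem_singleton] at hG
      rw [hG]
      exact Or.inl hsub
  have hmdAnn : ∀ a ∈ atomsF M, 0 ≤ deg (ℓ * xcls ℝ M a) := by
    intro a haA
    obtain ⟨c', hc', hc'0, hc'pos⟩ := hnef {a} (hflag1 a)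
    have hval : deg (ℓ * xcls ℝ M a)
        = c' a * (1 - ((linesThru M a).card : ℝ)) + ∑ L ∈ linesThru M a, c' L := by
      rw [hc']
      exact aux_m_atom hfin hloop hr hdeg c' a (hrkA a haA)
    rw [hval, hc'0 a (Finset.mem_singleton_self a), zero_mul, zero_add]
    apply Finset.sum_nonneg
    intro L hLt
    have hL2 : rkN M L.1 = 2 := (Finset.mem_filter.1 (Finset.mem_filter.1 hLt).1).2
    have hsub : a.1 ⊆ L.1 := (Finset.mem_filter.1 hLt).2
    apply hc'pos
    · rw [Finset.mem_singleton]
      intro h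
      rw [h] at hL2
      have := hrkA a haA
      omega
    · intro G hG
      rw [Finset.mem_singleton] at hG
      rw [hG]
      exact Or.inr hsub
  -- integrality of the intersection numbers
  have hmdLint : ∀ L ∈ linesF M, ∃ z : ℤ, deg (ℓ * xcls ℝ M L) = (z : ℝ) := by
    intro L hLm
    refine ⟨(∑ a ∈ atomsIn M L, mi a) - mi L, ?_⟩
    have hval : deg (ℓ * xcls ℝ M L)
        = (∑ a ∈ atomsIn M L, ((mi a : ℝ))) - (mi L : ℝ) := by
      rw [hmi]
      exact aux_m_line hfin hloop hr hdeg _ L (hrkL L hLm)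
    rw [hval]
    push_cast
    ring
  have hmdAint : ∀ a ∈ atomsF M, ∃ z : ℤ, deg (ℓ * xcls ℝ M a) = (z : ℝ) := by
    intro a haA
    refine ⟨mi a * (1 - ((linesThru M a).card : ℤ)) + ∑ L ∈ linesThru M a, mi L, ?_⟩
    have hval : deg (ℓ * xcls ℝ M a)
        = (mi a : ℝ) * (1 - ((linesThru M a).card : ℝ)) + ∑ L ∈ linesThru M a, (mi L : ℝ) := by
      rw [hmi]
      exact aux_m_atom hfin hloop hr hdeg _ a (hrkA a haA)
    rw [hval]
    push_cast
    ring
  have hint1 : ∀ L ∈ linesF M, deg (ℓ * xcls ℝ M L) ≠ 0 → 1 ≤ deg (ℓ * xcls ℝ M L) := by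
    intro L hLm hne
    obtain ⟨z, hz⟩ := hmdLint L hLm
    have h0 : (0 : ℝ) ≤ (z : ℝ) := hz ▸ hmdLnn L hLm
    have h1 : (0 : ℝ) < (z : ℝ) := lt_of_le_of_ne h0 (fun h => hne (by rw [hz, ← h]))
    have h2 : (0 : ℤ) < z := by exact_mod_cast h1
    rw [hz]
    exact_mod_cast h2
  -- expansion of the goal
  have hexp : ℓ * (ℓ - alpha ℝ M i + flatsOfRank ℝ M 2)
      = ℓ * ℓ - ℓ * alpha ℝ M i + ℓ * flatsOfRank ℝ M 2 := by ring
  have hd1 : deg (ℓ * ℓ)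
      = ∑ a ∈ atomsF M, c a * deg (ℓ * xcls ℝ M a)
        + ∑ L ∈ linesF M, c L * deg (ℓ * xcls ℝ M L) := by
    have h0 : deg (ℓ * ℓ) = ∑ F : FlatIdx M, c F * deg (ℓ * xcls ℝ M F) := by
      nth_rewrite 1 [hc]
      rw [aux_deg_lin_mul]
      apply Finset.sum_congr rfl
      intro F _
      rw [mul_comm (xcls ℝ M F)]
    rw [h0, aux_sum_split hfin hloop hr]
  have hd2 : deg (ℓ * alpha ℝ M i) = ∑ a ∈ atomsF M, c a := by
    rw [hc]
    exact aux_m_alpha hfin hloop hr hdeg c hi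
  have hd3 : deg (ℓ * flatsOfRank ℝ M 2) = ∑ L ∈ linesF M, deg (ℓ * xcls ℝ M L) := by
    rw [aux_S1_eq, Finset.mul_sum, map_sum]
  rw [hexp, map_add, map_sub, hd1, hd2, hd3]
  -- arithmetic part
  set Z : Finset (FlatIdx M) :=
    (linesF M).filter (fun L => deg (ℓ * xcls ℝ M L) = 0) with hZdef
  have step1 : ∑ L ∈ linesF M, deg (ℓ * xcls ℝ M L)
      = (∑ a ∈ atomsF M, c a * ((linesThru M a).card : ℝ)) - ∑ L ∈ linesF M, c L := by
    rw [Finset.sum_congr rfl hmdL, Finset.sum_sub_distrib, aux_double_count c (linesF M)]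
    rfl
  have step2 : (- ∑ L ∈ Z, c L) ≤ ∑ L ∈ linesF M, c L * (deg (ℓ * xcls ℝ M L) - 1) := by
    have key : ∀ L ∈ linesF M, (if deg (ℓ * xcls ℝ M L) = 0 then -(c L) else 0)
        ≤ c L * (deg (ℓ * xcls ℝ M L) - 1) := by
      intro L hLm
      split_ifs with h
      · rw [h]
        have := hcpos L
        nlinarith
      · have h1 := hint1 L hLm h
        have := hcpos L
        nlinarith
    calc (- ∑ L ∈ Z, c L) = ∑ L ∈ Z, -(c L) := by rw [Finset.sum_neg_distrib]
      _ = ∑ L ∈ linesF M, if deg (ℓ * xcls ℝ M L) = 0 then -(c L) else 0 :=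
          Finset.sum_filter _ _
      _ ≤ ∑ L ∈ linesF M, c L * (deg (ℓ * xcls ℝ M L) - 1) := Finset.sum_le_sum key
  have step3 : ∑ L ∈ Z, c L = ∑ a ∈ atomsF M,
      c a * ((Z.filter (fun L => a.1 ⊆ L.1)).card : ℝ) := by
    have e : ∀ L ∈ Z, c L = ∑ a ∈ atomsIn M L, c a := by
      intro L hLZ
      have h1 := Finset.mem_filter.1 hLZ
      have h2 := hmdL L h1.1
      rw [h1.2] at h2
      linarith
    rw [Finset.sum_congr rfl e, aux_double_count c Z]
  have step4 : ∀ a ∈ atomsF M,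
      c a * ((Z.filter (fun L => a.1 ⊆ L.1)).card : ℝ)
        ≤ c a * (deg (ℓ * xcls ℝ M a) + ((linesThru M a).card : ℝ) - 1) := by
    intro a haA
    have hksub : Z.filter (fun L => a.1 ⊆ L.1) ⊆ linesThru M a :=
      Finset.filter_subset_filter _ (Finset.filter_subset _ _)
    have hkn : (Z.filter (fun L => a.1 ⊆ L.1)).card ≤ (linesThru M a).card :=
      Finset.card_le_card hksub
    rcases eq_or_lt_of_le (hcpos a) with hca | hca
    · rw [← hca]
      simp
    rcases lt_or_eq_of_le hkn with hlt | heqc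
    · have hkR : ((Z.filter (fun L => a.1 ⊆ L.1)).card : ℝ) + 1 ≤ ((linesThru M a).card : ℝ) := by
        exact_mod_cast hlt
      have hnn := hmdAnn a haA
      apply mul_le_mul_of_nonneg_left _ (le_of_lt hca)
      linarith
    · have heq : Z.filter (fun L => a.1 ⊆ L.1) = linesThru M a :=
        Finset.eq_of_subset_of_card_le hksub (le_of_eq heqc.symm)
      have hallZ : ∀ L ∈ linesThru M a, deg (ℓ * xcls ℝ M L) = 0 := by
        intro L hLt
        rw [← heq] at hLt
        exact (Finset.mem_filter.1 (Finset.mem_filter.1 hLt).1).2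
      have hclower : ∀ L ∈ linesThru M a, c a ≤ c L := by
        intro L hLt
        have hLLns : L ∈ linesF M := (Finset.mem_filter.1 hLt).1
        have h0 := hmdL L hLLns
        rw [hallZ L hLt] at h0
        have hmem : a ∈ atomsIn M L :=
          Finset.mem_filter.2 ⟨haA, (Finset.mem_filter.1 hLt).2⟩
        have hsingle : c a ≤ ∑ b ∈ atomsIn M L, c b :=
          Finset.single_le_sum (fun b _ => hcpos b) hmem
        linarith
      have hmda : c a ≤ deg (ℓ * xcls ℝ M a) := by
        rw [hmdA a haA]
        have hsum : ∑ L ∈ linesThru M a, c a ≤ ∑ L ∈ linesThru M a, c L :=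
          Finset.sum_le_sum hclower
        rw [Finset.sum_const, nsmul_eq_mul] at hsum
        nlinarith
      have hmd1 : 1 ≤ deg (ℓ * xcls ℝ M a) := by
        obtain ⟨z, hz⟩ := hmdAint a haA
        have hpos : (0 : ℝ) < (z : ℝ) := by
          rw [← hz]
          exact lt_of_lt_of_le hca hmda
        have h2 : (0 : ℤ) < z := by exact_mod_cast hpos
        rw [hz]
        exact_mod_cast h2
      apply mul_le_mul_of_nonneg_left _ (le_of_lt hca)
      have hkn' : ((Z.filter (fun L => a.1 ⊆ L.1)).card : ℝ)
          = ((linesThru M a).card : ℝ) := by exact_mod_cast heqc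
      linarith
  have hfin1 : ∑ a ∈ atomsF M, c a * ((Z.filter (fun L => a.1 ⊆ L.1)).card : ℝ)
      ≤ ∑ a ∈ atomsF M, c a * (deg (ℓ * xcls ℝ M a) + ((linesThru M a).card : ℝ) - 1) :=
    Finset.sum_le_sum step4
  have e1 : ∑ L ∈ linesF M, c L * (deg (ℓ * xcls ℝ M L) - 1)
      = ∑ L ∈ linesF M, c L * deg (ℓ * xcls ℝ M L) - ∑ L ∈ linesF M, c L := by
    rw [← Finset.sum_sub_distrib]
    apply Finset.sum_congr rfl
    intros
    ring
  have e2 : ∑ a ∈ atomsF M, c a * (deg (ℓ * xcls ℝ M a) + ((linesThru M a).card : ℝ) - 1)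
      = ∑ a ∈ atomsF M, c a * deg (ℓ * xcls ℝ M a)
        + ∑ a ∈ atomsF M, c a * ((linesThru M a).card : ℝ) - ∑ a ∈ atomsF M, c a := by
    rw [← Finset.sum_add_distrib, ← Finset.sum_sub_distrib]
    apply Finset.sum_congr rfl
    intros
    ring
  linarith

end ChowPaper
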